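/- arXiv:1407.5766 — 7 statements merged into one kernel-verified Lean document; each statement's English description precedes it below -/
import Mathlib

section
/- The set V of positive integers v such that v ≡ 27 (mod 30) and such that for every prime p dividing v − 2 the multiplicative order of −2 modulo p is congruent to 0 modulo 4, is infinite. -/
lemma pow25mod30 (n : ℕ) : 25 ^ (n + 1) % 30 = 25 := by
  induction n with
  | zero => rfl
  | succ k ih =>
    rw [pow_succ, Nat.mul_mod, ih]

theorem stmt1 :
    {v : ℕ | 0 < v ∧ v % 30 = 27 ∧
      ∀ p : ℕ, p.Prime → p ∣ v - 2 → orderOf (-2 : ZMod p) % 4 = 0}.Infinite := by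
  apply Set.infinite_of_injective_forall_mem (f := fun k : ℕ => 25 ^ (k + 1) + 2)

  · intro a b hab
    simp only [Nat.add_right_cancel_iff] at hab
    have := Nat.pow_right_injective (by norm_num : 2 ≤ 25) hab
    omega
  · intro k
    refine ⟨by positivity, ?_, ?_⟩
    · rw [Nat.add_mod, pow25mod30]
    · intro p hp hdvd
      have h1 : 25 ^ (k + 1) + 2 - 2 = 5 ^ (2 * (k + 1)) := by
        rw [Nat.add_sub_cancel, pow_mul]; norm_num
      rw [h1] at hdvd
      have h5 : p = 5 := by
        have := hp.dvd_of_dvd_pow hdvd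
        exact (Nat.prime_dvd_prime_iff_eq hp (by norm_num)).mp this
      subst h5
      have h4 : orderOf (-2 : ZMod 5) = 4 := by
        rw [orderOf_eq_iff (by norm_num)]
        exact ⟨by decide, by decide⟩
      rw [h4]
end

section
/- If p is a prime with p ≡ 5 (mod 8), then the multiplicative order of −2 modulo p is congruent to 0 modulo 4. -/
lemma aux_four_dvd (d m : ℕ) (hm : m % 2 = 1) (h1 : d ∣ 4 * m) (h2 : ¬ d ∣ 2 * m) :
    d % 4 = 0 := by
  rw [← Nat.dvd_iff_mod_eq_zero]
  by_contra h4
  apply h2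
  rcases Nat.even_or_odd d with he | ho
  · obtain ⟨e, rfl⟩ := he
    have hd2e : 2 * e ∣ 2 * (2 * m) := by
      have h4m : (4 : ℕ) * m = 2 * (2 * m) := by ring
      rw [← h4m]
      simpa [two_mul] using h1
    have he2m : e ∣ 2 * m := (Nat.mul_dvd_mul_iff_left (by norm_num : 0 < 2)).mp hd2e
    have heodd : e % 2 = 1 := by
      rcases Nat.even_or_odd e with ⟨f, rfl⟩ | hoe
      · exact absurd (by ring_nf; omega : (4 : ℕ) ∣ f + f + (f + f)) h4
      · omega
    have hce : Nat.Coprime e 2 := by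
      simpa [Nat.coprime_two_right, Nat.odd_iff] using heodd
    have hem : e ∣ m := hce.dvd_of_dvd_mul_left (by simpa [mul_comm] using he2m)
    calc e + e = 2 * e := by ring
    _ ∣ 2 * m := Nat.mul_dvd_mul_left 2 hem
  · have hcd : Nat.Coprime d 4 := by
      have h2c : Nat.Coprime d 2 := by
        simpa [Nat.coprime_two_right] using ho
      simpa [show (4:ℕ) = 2 ^ 2 by norm_num] using h2c.pow_right 2
    have : d ∣ m := hcd.dvd_of_dvd_mul_left (by simpa [mul_comm] using h1)
    exact this.mul_left 2

theorem stmt3 (p : ℕ) (hp : p.Prime) (h : p % 8 = 5) :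
    orderOf (-2 : ZMod p) % 4 = 0 := by
  haveI := Fact.mk hp
  have hp5 : 5 ≤ p := by omega
  have hp2 : p ≠ 2 := by omega
  have hne : (-2 : ZMod p) ≠ 0 := by
    intro h0
    have h2 : ((2 : ℕ) : ZMod p) = 0 := by
      have := neg_eq_zero.mp h0
      push_cast
      exact this
    have := (ZMod.natCast_eq_zero_iff 2 p).mp h2
    have := Nat.le_of_dvd (by norm_num) this
    omega
  have hnotsq : ¬ IsSquare (-2 : ZMod p) := by
    rw [ZMod.exists_sq_eq_neg_two_iff hp2]
    omega
  have hdvd : orderOf (-2 : ZMod p) ∣ p - 1 := ZMod.orderOf_dvd_card_sub_one hne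
  have hnotdvd : ¬ orderOf (-2 : ZMod p) ∣ p / 2 := by
    intro hd
    exact hnotsq ((ZMod.euler_criterion p hne).mpr (orderOf_dvd_iff_pow_eq_one.mp hd))
  set m := p / 4 with hm
  have hmodd : m % 2 = 1 := by omega
  have h1 : orderOf (-2 : ZMod p) ∣ 4 * m := by
    have : p - 1 = 4 * m := by omega
    exact this ▸ hdvd
  have h2 : ¬ orderOf (-2 : ZMod p) ∣ 2 * m := by
    have : p / 2 = 2 * m := by omega
    exact this ▸ hnotdvd
  exact aux_four_dvd _ m hmodd h1 h2
end

section
/- There exist infinitely many primes p such that the multiplicative order of −2 modulo p is congruent to 0 modulo 4. -/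
/-!
By Dirichlet's theorem there are infinitely many primes `p ≡ 5 (mod 8)`. For such `p`, `-2` is a
quadratic non-residue, so by Euler's criterion its order divides `p - 1 = 4u` but not
`(p - 1) / 2 = 2u`; hence the full power of `2` in `p - 1`, namely `4`, divides the order.
-/

theorem Nat.pow_succ_dvd_of_dvd_mul_of_not_dvd {q k u d : ℕ} (hq : q.Prime)
    (hd : d ∣ q ^ (k + 1) * u) (hd' : ¬ d ∣ q ^ k * u) : q ^ (k + 1) ∣ d := by
  obtain ⟨d₁, d₂, hd₁, hd₂, rfl⟩ := Nat.dvd_mul.mp hd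
  obtain ⟨i, hi, rfl⟩ := (Nat.dvd_prime_pow hq).mp hd₁
  obtain rfl | hik : i = k + 1 ∨ i ≤ k := by omega
  · exact dvd_mul_right _ _
  · exact absurd (mul_dvd_mul (Nat.pow_dvd_pow q hik) hd₂) hd'

theorem ne_zero_of_not_isSquare {α : Type*} [MulZeroClass α] {a : α} (ha : ¬ IsSquare a) :
    a ≠ 0 := by
  rintro rfl
  exact ha IsSquare.zero

theorem ZMod.orderOf_not_dvd_half_of_not_isSquare {p : ℕ} [Fact p.Prime] {a : ZMod p}
    (ha : ¬ IsSquare a) : ¬ orderOf a ∣ p / 2 := fun h =>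
  ha <| (ZMod.euler_criterion p (ne_zero_of_not_isSquare ha)).mpr
    (orderOf_dvd_iff_pow_eq_one.mp h)

theorem ZMod.four_dvd_orderOf_neg_two {p : ℕ} [Fact p.Prime] (hp : p % 8 = 5) :
    4 ∣ orderOf (-2 : ZMod p) := by
  have hnonsq : ¬ IsSquare (-2 : ZMod p) := by
    rw [ZMod.exists_sq_eq_neg_two_iff (by omega)]
    omega
  have hdvd : orderOf (-2 : ZMod p) ∣ 2 ^ 2 * (p / 4) := by
    rw [show 2 ^ 2 * (p / 4) = p - 1 by omega]
    exact ZMod.orderOf_dvd_card_sub_one (ne_zero_of_not_isSquare hnonsq)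
  have hndvd : ¬ orderOf (-2 : ZMod p) ∣ 2 ^ 1 * (p / 4) := by
    rw [show 2 ^ 1 * (p / 4) = p / 2 by omega]
    exact ZMod.orderOf_not_dvd_half_of_not_isSquare hnonsq
  exact Nat.pow_succ_dvd_of_dvd_mul_of_not_dvd Nat.prime_two hdvd hndvd

theorem stmt5 :
    {p : ℕ | p.Prime ∧ Odd p ∧ orderOf (-2 : ZMod p) % 4 = 0}.Infinite := by
  refine (Nat.infinite_setOfPred_prime_and_eq_mod (q := 8) (a := 5) (by decide)).mono ?_
  rintro p ⟨hp, hp5⟩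
  have : Fact p.Prime := ⟨hp⟩
  have hp8 : p % 8 = 5 := (ZMod.val_natCast 8 p).symm.trans (congrArg ZMod.val hp5)
  exact ⟨hp, ⟨p / 2, by omega⟩, Nat.mod_eq_zero_of_dvd (ZMod.four_dvd_orderOf_neg_two hp8)⟩
end

section
/- Let p₁, …, p_t be (not necessarily distinct) odd primes such that for each i the multiplicative order of −2 modulo p_i is congruent to 0 modulo 4, and let H = Z_{p₁} × Z_{p₂} × ⋯ × Z_{p_t}. Then for every nonzero element h of H, the orbit of h under the map θ : h ↦ −2h (acting componentwise), i.e., the set {θ^k(h) : k ∈ ℕ}, has cardinality divisible by 4. -/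
theorem stmt10 (t : ℕ) (p : Fin t → ℕ)
    (hp : ∀ i, (p i).Prime) (hpodd : ∀ i, Odd (p i))
    (hord : ∀ i, orderOf (-2 : ZMod (p i)) % 4 = 0)
    (h : ∀ i, ZMod (p i)) (hh : h ≠ 0) :
    4 ∣ Set.ncard {x : ∀ i, ZMod (p i) |
        ∃ k : ℕ, x = (fun y : ∀ i, ZMod (p i) => (-2 : ℤ) • y)^[k] h} := by
  haveI : ∀ i, Fact (p i).Prime := fun i => ⟨hp i⟩
  -- component formula
  have hcomp : ∀ (k : ℕ) (i : Fin t), ((-2:ℤ)^k • h) i = (-2 : ZMod (p i))^k * h i := by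
    intro k i
    simp [Pi.smul_apply, zsmul_eq_mul]
  have hne2 : ∀ i, (-2 : ZMod (p i)) ≠ 0 := by
    intro i h0
    rw [neg_eq_zero] at h0
    have : ((2:ℕ) : ZMod (p i)) = 0 := by exact_mod_cast h0
    rw [ZMod.natCast_eq_zero_iff] at this
    have := (Nat.prime_dvd_prime_iff_eq (hp i) Nat.prime_two).mp this
    exact Nat.not_even_iff_odd.mpr (hpodd i) (by rw [this]; exact even_two)
  -- existence of a period
  set L : ℕ := ∏ i : Fin t, (p i - 1) with hL
  have hLpos : 0 < L := Finset.prod_pos (fun i _ => by have := (hp i).two_le; omega)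
  have hLper : ((-2:ℤ)^L) • h = h := by
    funext i
    rw [hcomp]
    obtain ⟨c, hc⟩ : (p i - 1) ∣ L := Finset.dvd_prod_of_mem _ (Finset.mem_univ i)
    rw [hc, pow_mul, ZMod.pow_card_sub_one_eq_one (hne2 i), one_pow, one_mul]
  have hex : ∃ m : ℕ, 0 < m ∧ ((-2:ℤ)^m) • h = h := ⟨L, hLpos, hLper⟩
  set m := Nat.find hex with hmdef
  obtain ⟨hmpos, hmper⟩ := Nat.find_spec hex
  -- multiples of L are periods
  have hmul : ∀ q : ℕ, ((-2:ℤ)^(q * L)) • h = h := by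
    intro q
    induction q with
    | zero => simp
    | succ n ih => rw [Nat.succ_mul, pow_add, mul_smul, hLper, ih]
  have hmmul : ∀ q : ℕ, ((-2:ℤ)^(m * q)) • h = h := by
    intro q
    induction q with
    | zero => simp
    | succ n ih => rw [Nat.mul_succ, pow_add, mul_smul, hmper, ih]
  -- cancellation: equal powers give a period
  have hcancel : ∀ a b : ℕ, a ≤ b → ((-2:ℤ)^a) • h = ((-2:ℤ)^b) • h →
      ((-2:ℤ)^(b - a)) • h = h := by
    intro a b hab heq
    have hle : a ≤ a * L := Nat.le_mul_of_pos_right a hLpos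
    calc ((-2:ℤ)^(b - a)) • h = ((-2:ℤ)^(b - a)) • (((-2:ℤ)^(a * L)) • h) := by rw [hmul]
      _ = ((-2:ℤ)^(b - a + a * L)) • h := by rw [← mul_smul, ← pow_add]
      _ = ((-2:ℤ)^((a * L - a) + b)) • h := by congr 2; omega
      _ = ((-2:ℤ)^(a * L - a)) • (((-2:ℤ)^b) • h) := by rw [← mul_smul, ← pow_add]
      _ = ((-2:ℤ)^(a * L - a)) • (((-2:ℤ)^a) • h) := by rw [heq]
      _ = ((-2:ℤ)^(a * L)) • h := by rw [← mul_smul, ← pow_add]; congr 2; omega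
      _ = h := hmul a
  -- the orbit set
  have hset : {x : ∀ i, ZMod (p i) |
      ∃ k : ℕ, x = (fun y : ∀ i, ZMod (p i) => (-2 : ℤ) • y)^[k] h}
      = ↑((Finset.range m).image (fun k => ((-2:ℤ)^k) • h)) := by
    ext x
    simp only [Set.mem_setOf_eq, Finset.coe_image, Set.mem_image, Finset.mem_coe,
      Finset.mem_range]
    constructor
    · rintro ⟨k, rfl⟩
      refine ⟨k % m, Nat.mod_lt _ hmpos, ?_⟩
      rw [smul_iterate]
      show ((-2:ℤ)^(k % m)) • h = ((-2:ℤ)^k) • h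
      conv_rhs => rw [← Nat.mod_add_div k m]
      rw [pow_add, mul_smul, hmmul (k / m)]
    · rintro ⟨k, _, rfl⟩
      exact ⟨k, by rw [smul_iterate]⟩
  rw [hset, Set.ncard_coe_finset]
  have hinj : Set.InjOn (fun k => ((-2:ℤ)^k) • h) ↑(Finset.range m) := by
    intro a ha b hb heq
    simp only [Finset.coe_range, Set.mem_Iio] at ha hb
    by_contra hab
    rcases Nat.lt_or_ge a b with hlt | hge
    · exact (Nat.find_min hex (by omega : b - a < m)) ⟨by omega, hcancel a b hlt.le heq⟩
    · have hlt : b < a := by omega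
      exact (Nat.find_min hex (by omega : a - b < m)) ⟨by omega, hcancel b a hlt.le heq.symm⟩
  rw [Finset.card_image_of_injOn hinj, Finset.card_range]
  -- 4 divides m
  obtain ⟨i₀, hi₀⟩ := Function.ne_iff.mp hh
  have hi₀' : h i₀ ≠ 0 := hi₀
  have hcomp' : (-2 : ZMod (p i₀))^m * h i₀ = h i₀ := by
    have := congrFun hmper i₀
    rw [hcomp] at this
    exact this
  have hpow1 : (-2 : ZMod (p i₀))^m = 1 := by
    have := mul_right_cancel₀ hi₀' (by rw [hcomp', one_mul] : (-2 : ZMod (p i₀))^m * h i₀ = 1 * h i₀)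
    exact this
  have hdvd : orderOf (-2 : ZMod (p i₀)) ∣ m := orderOf_dvd_of_pow_eq_one hpow1
  exact dvd_trans (Nat.dvd_of_mod_eq_zero (hord i₀)) hdvd
end

section
/- Let H be a finite abelian group of odd order such that every orbit of the map θ : h ↦ −2h on the set of nonzero elements of H has cardinality divisible by 4. Then there exists a function γ from Z₅ × (H \ {0}) to {1, 2} such that: (1) γ(g) ≠ γ(−2g) for every g ∈ Z₅ × (H \ {0}); and (2) whenever g, g′ ∈ Z₅ × (H \ {0}) satisfy g + g′ ∈ Z₅ × {0}, one has γ(g) = γ(g′). -/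
set_option linter.unusedSectionVars false
namespace Stmt11Aux

variable {H : Type*} [AddCommGroup H] [Fintype H]

lemma iter_smul (k : ℕ) (h : H) :
    (fun y : H => (-2 : ℤ) • y)^[k] h = ((-2 : ℤ) ^ k) • h := by
  induction k with
  | zero => simp
  | succ n ih =>
      rw [Function.iterate_succ_apply', ih]
      show (-2 : ℤ) • ((-2:ℤ)^n • h) = _
      rw [smul_smul, ← pow_succ']

lemma smul_neg_two_inj (hodd : Odd (Fintype.card H)) :
    Function.Injective (fun y : H => (-2 : ℤ) • y) := by
  intro x y hxy
  simp only at hxy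
  have h2 : (2 : ℕ) • (x - y) = 0 := by
    have h2' : (2 : ℤ) • (x - y) = 0 := by
      rw [neg_smul, neg_smul, neg_inj] at hxy
      rw [smul_sub, hxy, sub_self]
    have : ((2:ℕ) : ℤ) • (x - y) = 0 := by exact_mod_cast h2'
    rwa [natCast_zsmul] at this
  by_contra hne
  have hdvd : addOrderOf (x - y) ∣ 2 := addOrderOf_dvd_of_nsmul_eq_zero h2
  have hdvd' : addOrderOf (x - y) ∣ Fintype.card H := addOrderOf_dvd_card
  have hcop : Nat.Coprime (Fintype.card H) 2 := hodd.coprime_two_right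
  have h1 : addOrderOf (x - y) ∣ 1 := by
    have := Nat.dvd_gcd hdvd' hdvd
    rwa [Nat.Coprime.gcd_eq_one hcop] at this
  have h1' : addOrderOf (x - y) = 1 := Nat.dvd_one.mp h1
  exact hne (sub_eq_zero.mp (AddMonoid.addOrderOf_eq_one_iff.mp h1'))


lemma pow_smul_inj (hodd : Odd (Fintype.card H)) (k : ℕ) :
    Function.Injective (fun y : H => (-2 : ℤ) ^ k • y) := by
  have : (fun y : H => (-2 : ℤ) ^ k • y) = (fun y : H => (-2 : ℤ) • y)^[k] := by
    funext y; rw [iter_smul]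
  rw [this]
  exact (smul_neg_two_inj hodd).iterate k

lemma exists_period (hodd : Odd (Fintype.card H)) (h : H) :
    ∃ p, 0 < p ∧ (-2 : ℤ) ^ p • h = h := by
  obtain ⟨i, j, hne, heq⟩ := Finite.exists_ne_map_eq_of_infinite
    (fun k : ℕ => (-2 : ℤ) ^ k • h)
  rcases hne.lt_or_gt with hij | hij
  · refine ⟨j - i, by omega, ?_⟩
    apply pow_smul_inj hodd i
    show (-2:ℤ)^i • ((-2:ℤ)^(j-i) • h) = (-2:ℤ)^i • h
    rw [smul_smul, ← pow_add]
    rw [show i + (j - i) = j by omega]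
    exact heq.symm
  · refine ⟨i - j, by omega, ?_⟩
    apply pow_smul_inj hodd j
    show (-2:ℤ)^j • ((-2:ℤ)^(i-j) • h) = (-2:ℤ)^j • h
    rw [smul_smul, ← pow_add]
    rw [show j + (i - j) = i by omega]
    exact heq

open scoped Classical

noncomputable def per (hodd : Odd (Fintype.card H)) (h : H) : ℕ :=
  Nat.find (exists_period hodd h)

lemma per_pos (hodd : Odd (Fintype.card H)) (h : H) : 0 < per hodd h :=
  (Nat.find_spec (exists_period hodd h)).1

lemma per_smul (hodd : Odd (Fintype.card H)) (h : H) :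
    (-2 : ℤ) ^ (per hodd h) • h = h :=
  (Nat.find_spec (exists_period hodd h)).2

lemma per_mul_smul (hodd : Odd (Fintype.card H)) (h : H) (q : ℕ) :
    (-2 : ℤ) ^ (per hodd h * q) • h = h := by
  induction q with
  | zero => simp
  | succ n ih =>
      rw [Nat.mul_succ, pow_add, mul_smul, per_smul, ih]

lemma per_dvd (hodd : Odd (Fintype.card H)) {h : H} {m : ℕ}
    (hm : (-2 : ℤ) ^ m • h = h) : per hodd h ∣ m := by
  set P := per hodd h with hP
  have hsm : (-2:ℤ) ^ (m % P) • h = h := by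
    have h1 : (-2:ℤ)^(m % P) • ((-2:ℤ)^(P*(m/P)) • h) = (-2:ℤ)^m • h := by
      rw [smul_smul, ← pow_add, Nat.mod_add_div m P]
    rw [per_mul_smul] at h1
    rw [h1, hm]
  rcases Nat.eq_zero_or_pos (m % P) with h0 | h0
  · exact Nat.dvd_of_mod_eq_zero h0
  · exfalso
    have := Nat.find_min (exists_period hodd h)
      (show m % P < P from Nat.mod_lt _ (per_pos hodd h))
    exact this ⟨h0, hsm⟩

lemma orbit_ncard (hodd : Odd (Fintype.card H)) (h : H) :
    Set.ncard {x : H | ∃ k : ℕ, x = (fun y : H => (-2 : ℤ) • y)^[k] h} = per hodd h := by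
  set P := per hodd h with hP
  have hset : {x : H | ∃ k : ℕ, x = (fun y : H => (-2 : ℤ) • y)^[k] h}
      = ↑((Finset.range P).image (fun k => (-2:ℤ)^k • h)) := by
    ext x
    simp only [Set.mem_setOf_eq, Finset.coe_image, Set.mem_image, Finset.mem_coe,
      Finset.mem_range]
    constructor
    · rintro ⟨k, rfl⟩
      refine ⟨k % P, Nat.mod_lt _ (per_pos hodd h), ?_⟩
      rw [iter_smul]
      have h1 : (-2:ℤ)^(k % P) • ((-2:ℤ)^(P*(k/P)) • h) = (-2:ℤ)^k • h := by
        rw [smul_smul, ← pow_add, Nat.mod_add_div k P]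
      rw [per_mul_smul] at h1
      exact h1
    · rintro ⟨k, _, rfl⟩
      exact ⟨k, (iter_smul k h).symm⟩
  rw [hset, Set.ncard_coe_finset, Finset.card_image_of_injOn, Finset.card_range]
  intro i hi j hj hij
  simp only [Finset.mem_coe, Finset.mem_range] at hi hj
  by_contra hne
  rcases Ne.lt_or_gt hne with hlt | hlt
  · have : (-2:ℤ)^(j-i) • h = h := by
      apply pow_smul_inj hodd i
      show (-2:ℤ)^i • ((-2:ℤ)^(j-i) • h) = (-2:ℤ)^i • h
      rw [smul_smul, ← pow_add, show i + (j - i) = j by omega]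
      exact hij.symm
    have := per_dvd hodd this
    have := Nat.le_of_dvd (by omega) this
    omega
  · have : (-2:ℤ)^(i-j) • h = h := by
      apply pow_smul_inj hodd j
      show (-2:ℤ)^j • ((-2:ℤ)^(i-j) • h) = (-2:ℤ)^j • h
      rw [smul_smul, ← pow_add, show j + (i - j) = i by omega]
      exact hij
    have := per_dvd hodd this
    have := Nat.le_of_dvd (by omega) this
    omega


variable (hodd : Odd (Fintype.card H))

lemma per_even {r : H}
    (h4 : 4 ∣ per hodd r) {d : ℕ}
    (hd : (-2:ℤ)^d • r = r ∨ (-2:ℤ)^d • r = -r) : 2 ∣ d := by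
  rcases hd with hd | hd
  · obtain ⟨t, rfl⟩ : 4 ∣ d := h4.trans (per_dvd hodd hd)
    exact ⟨2 * t, by ring⟩
  · have h2d : (-2:ℤ)^(2*d) • r = r := by
      rw [two_mul, pow_add, mul_smul, hd, smul_neg, hd, neg_neg]
    obtain ⟨t, ht⟩ : 4 ∣ 2 * d := h4.trans (per_dvd hodd h2d)
    exact ⟨t, by omega⟩

lemma parity_aux {r : H}
    (h4 : 4 ∣ per hodd r) {a b : ℕ} (hle : b ≤ a)
    (hab : (-2:ℤ)^a • r = (-2:ℤ)^b • r ∨ (-2:ℤ)^a • r = -((-2:ℤ)^b • r)) :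
    a % 2 = b % 2 := by
  have hcan : (-2:ℤ)^(a - b) • r = r ∨ (-2:ℤ)^(a - b) • r = -r := by
    rcases hab with hab | hab
    · left
      apply pow_smul_inj hodd b
      show (-2:ℤ)^b • ((-2:ℤ)^(a-b) • r) = (-2:ℤ)^b • r
      rw [smul_smul, ← pow_add, show b + (a - b) = a by omega]
      exact hab
    · right
      apply pow_smul_inj hodd b
      show (-2:ℤ)^b • ((-2:ℤ)^(a-b) • r) = (-2:ℤ)^b • (-r)
      rw [smul_smul, ← pow_add, show b + (a - b) = a by omega, smul_neg]
      exact hab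
  have := per_even hodd h4 hcan
  omega

lemma parity {r : H}
    (h4 : 4 ∣ per hodd r) {a b : ℕ}
    (hab : (-2:ℤ)^a • r = (-2:ℤ)^b • r ∨ (-2:ℤ)^a • r = -((-2:ℤ)^b • r)) :
    a % 2 = b % 2 := by
  rcases le_total b a with hle | hle
  · exact parity_aux hodd h4 hle hab
  · refine (parity_aux hodd h4 hle ?_).symm
    rcases hab with hab | hab
    · exact Or.inl hab.symm
    · exact Or.inr (by rw [hab, neg_neg])

def Rel (h h' : H) : Prop :=
  ∃ k : ℕ, h' = (-2 : ℤ) ^ k • h ∨ h' = -((-2 : ℤ) ^ k • h)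

lemma rel_refl (h : H) : Rel h h := ⟨0, Or.inl (by simp)⟩

include hodd in
lemma rel_symm {h h' : H} (hr : Rel h h') : Rel h' h := by
  obtain ⟨k, hk⟩ := hr
  obtain ⟨p, hp, hps⟩ := exists_period hodd h
  refine ⟨(k + 1) * p - k, ?_⟩
  have key : (-2:ℤ)^((k+1)*p - k) • ((-2:ℤ)^k • h) = h := by
    rw [smul_smul, ← pow_add, show (k+1)*p - k + k = (k+1)*p by
      have h1 : k + 1 ≤ (k+1)*p := Nat.le_mul_of_pos_right _ hp
      omega]
    clear hk
    induction (k+1) with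
    | zero => simp
    | succ n ih => rw [Nat.succ_mul, pow_add, mul_smul, hps, ih]
  rcases hk with hk | hk
  · exact Or.inl (by rw [hk, key])
  · exact Or.inr (by rw [hk, smul_neg, neg_neg, key])

lemma rel_trans {a b c : H} (h1 : Rel a b) (h2 : Rel b c) : Rel a c := by
  obtain ⟨k, hk⟩ := h1
  obtain ⟨j, hj⟩ := h2
  refine ⟨j + k, ?_⟩
  rcases hk with hk | hk <;> rcases hj with hj | hj <;>
    [left; right; right; left] <;>
    rw [hj, hk, pow_add, mul_smul] <;> simp [smul_neg]

open scoped Classical in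
noncomputable def relSetoid (hodd : Odd (Fintype.card H)) : Setoid H :=
  ⟨Rel, fun _ => rel_refl _, rel_symm hodd, rel_trans⟩

noncomputable def rep (hodd : Odd (Fintype.card H)) (h : H) : H :=
  (Quotient.mk (relSetoid hodd) h).out

lemma rep_rel (h : H) : Rel (rep hodd h) h := by
  have := Quotient.mk_out (s := relSetoid hodd) h
  exact this

lemma rep_eq_of_rel {h h' : H} (hr : Rel h h') :
    rep hodd h = rep hodd h' :=
  congrArg Quotient.out (Quotient.sound (s := relSetoid hodd) hr)

lemma rep_ne_zero {h : H} (hne : h ≠ 0) : rep hodd h ≠ 0 := by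
  intro h0
  obtain ⟨k, hk⟩ := rep_rel hodd h
  rw [h0] at hk
  simp at hk
  exact hne hk

noncomputable def f (hodd : Odd (Fintype.card H)) (h : H) : ℕ :=
  if ∃ k : ℕ, h = (-2:ℤ)^(2*k) • rep hodd h ∨ h = -((-2:ℤ)^(2*k) • rep hodd h)
  then 1 else 2


lemma f_mem (h : H) : f hodd h = 1 ∨ f hodd h = 2 := by
  unfold f; split <;> simp

include hodd in
lemma f_eq_one_iff (h4 : ∀ x : H, x ≠ 0 → 4 ∣ per hodd x) {h : H} (hne : h ≠ 0)
    {k : ℕ} (hk : h = (-2:ℤ)^k • rep hodd h ∨ h = -((-2:ℤ)^k • rep hodd h)) :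
    f hodd h = 1 ↔ k % 2 = 0 := by
  have hr : rep hodd h ≠ 0 := rep_ne_zero hodd hne
  have h4r := h4 _ hr
  unfold f
  set r := rep hodd h with hrdef
  by_cases hC : ∃ j : ℕ, h = (-2:ℤ)^(2*j) • r ∨ h = -((-2:ℤ)^(2*j) • r)
  · rw [if_pos hC]
    simp only [true_iff, eq_self_iff_true]
    obtain ⟨j, hj⟩ := hC
    have hcomb : (-2:ℤ)^k • r = (-2:ℤ)^(2*j) • r ∨
        (-2:ℤ)^k • r = -((-2:ℤ)^(2*j) • r) := by
      rcases hk with hk | hk <;> rcases hj with hj | hj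
      · exact Or.inl (by rw [← hk, ← hj])
      · exact Or.inr (by rw [← hk]; exact hj)
      · have hX : (-2:ℤ)^k • r = -h := by rw [hk, neg_neg]
        exact Or.inr (hX.trans (congrArg Neg.neg hj))
      · have hX : (-2:ℤ)^k • r = -h := by rw [hk, neg_neg]
        exact Or.inl (hX.trans (by rw [hj, neg_neg]))
    have := parity hodd h4r hcomb
    simp only [Nat.mul_mod_right] at this
    simp [this]
  · rw [if_neg hC]
    simp only [OfNat.ofNat_ne_one, false_iff]
    intro hk2
    obtain ⟨j, hj⟩ : ∃ j, k = 2 * j := ⟨k / 2, by omega⟩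
    exact hC ⟨j, hj ▸ hk⟩


include hodd in
lemma f_neg (h : H) : f hodd (-h) = f hodd h := by
  have hrel : Rel h (-h) := ⟨0, Or.inr (by simp)⟩
  have hrep : rep hodd (-h) = rep hodd h := (rep_eq_of_rel hodd hrel).symm
  have key : ∀ r : H,
      (∃ j : ℕ, -h = (-2:ℤ)^(2*j) • r ∨ -h = -((-2:ℤ)^(2*j) • r)) ↔
      (∃ j : ℕ, h = (-2:ℤ)^(2*j) • r ∨ h = -((-2:ℤ)^(2*j) • r)) := by
    intro r
    constructor
    · rintro ⟨j, hj | hj⟩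
      · exact ⟨j, Or.inr (by rw [← hj, neg_neg])⟩
      · exact ⟨j, Or.inl (neg_injective hj)⟩
    · rintro ⟨j, hj | hj⟩
      · exact ⟨j, Or.inr (congrArg Neg.neg hj)⟩
      · exact ⟨j, Or.inl (by rw [hj, neg_neg])⟩
  unfold f
  rw [hrep]
  exact if_congr (key _) rfl rfl

include hodd in
lemma f_two_smul_ne (h4 : ∀ x : H, x ≠ 0 → 4 ∣ per hodd x) {h : H} (hne : h ≠ 0) :
    f hodd ((-2:ℤ) • h) ≠ f hodd h := by
  have hrel : Rel h ((-2:ℤ) • h) := ⟨1, Or.inl (by rw [pow_one])⟩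
  have hrep : rep hodd ((-2:ℤ) • h) = rep hodd h := (rep_eq_of_rel hodd hrel).symm
  have hne2 : (-2:ℤ) • h ≠ 0 := by
    intro h0
    exact hne (smul_neg_two_inj hodd (by simpa using h0))
  set r := rep hodd h with hrdef
  obtain ⟨k, hk⟩ := rep_rel hodd h
  rw [← hrdef] at hk
  have hk2 : (-2:ℤ) • h = (-2:ℤ)^(k+1) • rep hodd ((-2:ℤ) • h) ∨
      (-2:ℤ) • h = -((-2:ℤ)^(k+1) • rep hodd ((-2:ℤ) • h)) := by
    rw [hrep]
    rcases hk with hk | hk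
    · exact Or.inl (by rw [hk, smul_smul, ← pow_succ'])
    · exact Or.inr (by rw [hk, smul_neg, smul_smul, ← pow_succ'])
  have h1 := f_eq_one_iff hodd h4 hne (hrdef ▸ hk)
  have h2 := f_eq_one_iff hodd h4 hne2 hk2
  intro heq
  rcases f_mem hodd ((-2:ℤ) • h) with m | m
  · have a1 : k % 2 = 0 := h1.mp (by rw [← heq, m])
    have a2 : (k + 1) % 2 = 0 := h2.mp m
    omega
  · have b1 : ¬ (k % 2 = 0) := fun hx => by
      have hfh := h1.mpr hx
      rw [← heq, m] at hfh
      exact (by norm_num : (2:ℕ) ≠ 1) hfh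
    have b2 : ¬ ((k + 1) % 2 = 0) := fun hx => by
      have hfh := h2.mpr hx
      rw [m] at hfh
      exact (by norm_num : (2:ℕ) ≠ 1) hfh
    omega

end Stmt11Aux

theorem stmt11 {H : Type*} [AddCommGroup H] [Fintype H]
    (hodd : Odd (Fintype.card H))
    (horb : ∀ h : H, h ≠ 0 →
      4 ∣ Set.ncard {x : H | ∃ k : ℕ, x = (fun y : H => (-2 : ℤ) • y)^[k] h}) :
    ∃ γ : ZMod 5 × H → ℕ,
      (∀ g : ZMod 5 × H, g.2 ≠ 0 → γ g = 1 ∨ γ g = 2) ∧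
      (∀ g : ZMod 5 × H, g.2 ≠ 0 → γ g ≠ γ ((-2 : ℤ) • g)) ∧
      (∀ g g' : ZMod 5 × H, g.2 ≠ 0 → g'.2 ≠ 0 → (g + g').2 = 0 → γ g = γ g') := by
  have h4 : ∀ x : H, x ≠ 0 → 4 ∣ Stmt11Aux.per hodd x := by
    intro x hx
    have := horb x hx
    rwa [Stmt11Aux.orbit_ncard hodd x] at this
  refine ⟨fun g => Stmt11Aux.f hodd g.2, ?_, ?_, ?_⟩
  · intro g _
    exact Stmt11Aux.f_mem hodd g.2
  · intro g hg
    show Stmt11Aux.f hodd g.2 ≠ Stmt11Aux.f hodd ((-2 : ℤ) • g).2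
    have hsnd : ((-2 : ℤ) • g).2 = (-2:ℤ) • g.2 := rfl
    rw [hsnd]
    exact (Stmt11Aux.f_two_smul_ne hodd h4 hg).symm
  · intro g g' hg hg' hsum
    have hg2 : g'.2 = -g.2 := by
      have h0 : g.2 + g'.2 = 0 := hsum
      exact eq_neg_of_add_eq_zero_right h0
    show Stmt11Aux.f hodd g.2 = Stmt11Aux.f hodd g'.2
    rw [hg2, Stmt11Aux.f_neg hodd]
end

section
/- Let H be a finite abelian group of odd order having no element of order 3, let G = Z₅ × H, and let γ be a function from Z₅ × (H \ {0}) (the elements of G with nonzero H-component) to {1, 2} satisfying γ(g) ≠ γ(−2g) for all g in its domain. Let ∞₁ and ∞₂ be two points not in G. Let B⁰ be the collection of 3-element subsets {g, g′, g″} of G with g + g′ + g″ = 0 that are not contained in Z₅ × {0}; let B^∞ = { {−g, 2g, ∞_{γ(g)}} : g ∈ Z₅ × (H \ {0}) }; and let B* be the triple set of any Steiner triple system of order 7 on the point set (Z₅ × {0}) ∪ {∞₁, ∞₂}. Then (G ∪ {∞₁, ∞₂}, B⁰ ∪ B^∞ ∪ B*) is a Steiner triple system of order |G| + 2. -/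
/-- A Steiner triple system on the point set `V` (taken to be the whole type),
given by its collection `B` of triples: every triple has exactly 3 points and
every pair of distinct points lies in exactly one triple. -/
def IsSTS {V : Type*} (B : Set (Set V)) : Prop :=
  (∀ T ∈ B, T.ncard = 3) ∧ ∀ x y : V, x ≠ y → ∃! T, T ∈ B ∧ x ∈ T ∧ y ∈ T

section Aux
variable {H : Type*} [AddCommGroup H] [Fintype H]

lemma auxHtwo (hodd : Odd (Fintype.card H)) (x : H) (hx : x + x = 0) : x = 0 := by
  have h2 : addOrderOf x ∣ 2 :=
    addOrderOf_dvd_of_nsmul_eq_zero (by rw [two_nsmul]; exact hx)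
  have hc : addOrderOf x ∣ Fintype.card H := addOrderOf_dvd_card
  rcases (Nat.prime_two.eq_one_or_self_of_dvd _ h2) with h | h
  · exact AddMonoid.addOrderOf_eq_one_iff.mp h
  · exfalso
    have h2' : (2:ℕ) ∣ Fintype.card H := by rw [← h]; exact hc
    exact (Nat.not_even_iff_odd.mpr hodd) (even_iff_two_dvd.mpr h2')

set_option linter.unusedSectionVars false in
lemma auxHthree (h3 : ∀ x : H, addOrderOf x ≠ 3) (x : H) (hx : x + x + x = 0) : x = 0 := by
  have h2 : addOrderOf x ∣ 3 :=
    addOrderOf_dvd_of_nsmul_eq_zero (by show (3:ℕ) • x = 0; rw [show (3:ℕ) = 2+1 from rfl, succ_nsmul, two_nsmul]; exact hx)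
  rcases Nat.prime_three.eq_one_or_self_of_dvd _ h2 with h | h
  · exact AddMonoid.addOrderOf_eq_one_iff.mp h
  · exact absurd h (h3 x)

lemma auxGtwo (hodd : Odd (Fintype.card H)) (g : ZMod 5 × H) (h : g + g = 0) : g = 0 := by
  have h1 : g.1 + g.1 = 0 := congrArg Prod.fst h
  have h2 : g.2 + g.2 = 0 := congrArg Prod.snd h
  have : ∀ a : ZMod 5, a + a = 0 → a = 0 := by decide
  exact Prod.ext (this _ h1) (auxHtwo hodd _ h2)

lemma auxGthree (h3 : ∀ x : H, addOrderOf x ≠ 3) (g : ZMod 5 × H) (h : g + g + g = 0) : g = 0 := by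
  have h1 : g.1 + g.1 + g.1 = 0 := congrArg Prod.fst h
  have h2 : g.2 + g.2 + g.2 = 0 := congrArg Prod.snd h
  have : ∀ a : ZMod 5, a + a + a = 0 → a = 0 := by decide
  exact Prod.ext (this _ h1) (auxHthree h3 _ h2)

lemma auxGinj2 (hodd : Odd (Fintype.card H)) {a b : ZMod 5 × H} (h : a + a = b + b) : a = b := by
  have : (a - b) + (a - b) = 0 := by rw [← sub_eq_zero] at h; rw [← h]; abel
  have := auxGtwo hodd _ this
  rwa [sub_eq_zero] at this

lemma auxGsurj2 (hodd : Odd (Fintype.card H)) (g : ZMod 5 × H) : ∃ k, k + k = g := by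
  have hinj : Function.Injective (fun a : ZMod 5 × H => a + a) := fun a b h => auxGinj2 hodd h
  obtain ⟨k, hk⟩ := (Finite.injective_iff_surjective.mp hinj) g
  exact ⟨k, hk⟩

lemma B0_extract {G : Type*} [AddCommGroup G] {a b c g g' : G}
    (hsum : a + b + c = 0) (hab : a ≠ b) (hac : a ≠ c) (hbc : b ≠ c)
    (hg : g = a ∨ g = b ∨ g = c) (hg' : g' = a ∨ g' = b ∨ g' = c) (hgg' : g ≠ g') :
    -(g + g') ≠ g ∧ -(g + g') ≠ g' ∧ ({a, b, c} : Set G) = {g, g', -(g + g')} := by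
  have third : ∀ {u v w : G}, u + v + w = 0 → w = -(u + v) :=
    fun h => eq_neg_of_add_eq_zero_right h
  have hs1 : a + c + b = 0 := by rw [← hsum]; abel
  have hs2 : b + c + a = 0 := by rw [← hsum]; abel
  rcases hg with hg | hg | hg <;> rcases hg' with hg' | hg' | hg'
  · exact absurd (hg.trans hg'.symm) hgg'
  · have h3rd : c = -(g + g') := by rw [hg, hg']; exact third hsum
    refine ⟨by rw [← h3rd, hg]; exact Ne.symm hac,
            by rw [← h3rd, hg']; exact Ne.symm hbc, ?_⟩
    rw [← h3rd, hg, hg']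
  · have h3rd : b = -(g + g') := by rw [hg, hg']; exact third hs1
    refine ⟨by rw [← h3rd, hg]; exact Ne.symm hab,
            by rw [← h3rd, hg']; exact hbc, ?_⟩
    rw [← h3rd, hg, hg']; ext z; simp; tauto
  · have h3rd : c = -(g + g') := by
      rw [hg, hg']; exact third (by rw [← hsum]; abel)
    refine ⟨by rw [← h3rd, hg]; exact Ne.symm hbc,
            by rw [← h3rd, hg']; exact Ne.symm hac, ?_⟩
    rw [← h3rd, hg, hg']; ext z; simp; tauto
  · exact absurd (hg.trans hg'.symm) hgg'
  · have h3rd : a = -(g + g') := by rw [hg, hg']; exact third hs2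
    refine ⟨by rw [← h3rd, hg]; exact hab,
            by rw [← h3rd, hg']; exact hac, ?_⟩
    rw [← h3rd, hg, hg']; ext z; simp; tauto
  · have h3rd : b = -(g + g') := by
      rw [hg, hg']; exact third (by rw [← hsum]; abel)
    refine ⟨by rw [← h3rd, hg]; exact hbc,
            by rw [← h3rd, hg']; exact Ne.symm hab, ?_⟩
    rw [← h3rd, hg, hg']; ext z; simp; tauto
  · have h3rd : a = -(g + g') := by
      rw [hg, hg']; exact third (by rw [← hsum]; abel)
    refine ⟨by rw [← h3rd, hg]; exact hac,
            by rw [← h3rd, hg']; exact hab, ?_⟩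
    rw [← h3rd, hg, hg']; ext z; simp; tauto
  · exact absurd (hg.trans hg'.symm) hgg'

lemma tripleNcard {α : Type*} {a b c : α} (hab : a ≠ b) (hac : a ≠ c) (hbc : b ≠ c) :
    ({a, b, c} : Set α).ncard = 3 := by
  rw [Set.ncard_insert_of_notMem (by simp [hab, hac]) (Set.toFinite _), Set.ncard_pair hbc]

end Aux

theorem stmt13 {H : Type*} [AddCommGroup H] [Fintype H]
    (hodd : Odd (Fintype.card H)) (h3 : ∀ x : H, addOrderOf x ≠ 3)
    -- γ sends Z₅ × (H \ {0}) to the two-element set indexing ∞₁, ∞₂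
    (γ : ZMod 5 × H → Fin 2)
    (hγ : ∀ g : ZMod 5 × H, g.2 ≠ 0 → γ g ≠ γ ((-2 : ℤ) • g))
    -- B* : the triples of a Steiner triple system of order 7 on (Z₅ × {0}) ∪ {∞₁, ∞₂}
    (Bstar : Set (Set ((ZMod 5 × H) ⊕ Fin 2)))
    (hBsub : ∀ T ∈ Bstar,
      T ⊆ (Sum.inl '' {g : ZMod 5 × H | g.2 = 0}) ∪ Set.range Sum.inr)
    (hBcard : ∀ T ∈ Bstar, T.ncard = 3)
    (hBpairs : ∀ x ∈ (Sum.inl '' {g : ZMod 5 × H | g.2 = 0}) ∪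
        Set.range (Sum.inr : Fin 2 → (ZMod 5 × H) ⊕ Fin 2),
      ∀ y ∈ (Sum.inl '' {g : ZMod 5 × H | g.2 = 0}) ∪
        Set.range (Sum.inr : Fin 2 → (ZMod 5 × H) ⊕ Fin 2),
      x ≠ y → ∃! T, T ∈ Bstar ∧ x ∈ T ∧ y ∈ T) :
    IsSTS
      (({T | ∃ g g' g'' : ZMod 5 × H, g ≠ g' ∧ g ≠ g'' ∧ g' ≠ g'' ∧
            g + g' + g'' = 0 ∧ ¬(g.2 = 0 ∧ g'.2 = 0 ∧ g''.2 = 0) ∧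
            T = {Sum.inl g, Sum.inl g', Sum.inl g''}} :
          Set (Set ((ZMod 5 × H) ⊕ Fin 2)))
        ∪ {T | ∃ g : ZMod 5 × H, g.2 ≠ 0 ∧
            T = {Sum.inl (-g), Sum.inl ((2 : ℤ) • g), Sum.inr (γ g)}}
        ∪ Bstar) ∧
    Fintype.card ((ZMod 5 × H) ⊕ Fin 2) = Fintype.card (ZMod 5 × H) + 2 := by
  have Htwo : ∀ x : H, x + x = 0 → x = 0 := auxHtwo hodd
  have Gthree : ∀ g : ZMod 5 × H, g + g + g = 0 → g = 0 := auxGthree h3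
  have Ginj2 : ∀ {a b : ZMod 5 × H}, a + a = b + b → a = b := fun h => auxGinj2 hodd h
  have Gsurj2 : ∀ g : ZMod 5 × H, ∃ k, k + k = g := auxGsurj2 hodd
  set B0 : Set (Set ((ZMod 5 × H) ⊕ Fin 2)) :=
    {T | ∃ g g' g'' : ZMod 5 × H, g ≠ g' ∧ g ≠ g'' ∧ g' ≠ g'' ∧
      g + g' + g'' = 0 ∧ ¬(g.2 = 0 ∧ g'.2 = 0 ∧ g''.2 = 0) ∧
      T = {Sum.inl g, Sum.inl g', Sum.inl g''}} with hB0
  set Binf : Set (Set ((ZMod 5 × H) ⊕ Fin 2)) :=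
    {T | ∃ g : ZMod 5 × H, g.2 ≠ 0 ∧
      T = {Sum.inl (-g), Sum.inl ((2 : ℤ) • g), Sum.inr (γ g)}} with hBinf
  refine ⟨⟨?_, ?_⟩, by simp⟩
  · -- card part
    intro T hT
    rcases hT with (h0 | hinf) | hstar
    · rw [hB0] at h0
      obtain ⟨g, g', g'', h1, h2, h3', _, _, rfl⟩ := h0
      exact tripleNcard (by simp [h1]) (by simp [h2]) (by simp [h3'])
    · rw [hBinf] at hinf
      obtain ⟨g, hg2, rfl⟩ := hinf
      refine tripleNcard ?_ (by simp) (by simp)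
      simp only [ne_eq, Sum.inl.injEq]
      intro he
      apply hg2
      rw [two_zsmul] at he
      have h0 : g + g + g = 0 := by rw [← he, neg_add_cancel]
      simp [Gthree g h0]
    · exact hBcard T hstar
  · -- pairs part
    have himg : ∀ u v w : ZMod 5 × H,
        ({Sum.inl u, Sum.inl v, Sum.inl w} : Set ((ZMod 5 × H) ⊕ Fin 2)) =
          Sum.inl '' {u, v, w} := by
      intro u v w; simp [Set.image_insert_eq]
    have star_snd : ∀ T ∈ Bstar, ∀ g : ZMod 5 × H, Sum.inl g ∈ T → g.2 = 0 := by
      intro T hT g hg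
      rcases hBsub T hT hg with ⟨w, hw, hweq⟩ | ⟨w, hweq⟩
      · obtain rfl : w = g := Sum.inl.inj hweq
        exact hw
      · exact absurd hweq (by simp)
    have inf_snd : ∀ h : ZMod 5 × H, h.2 ≠ 0 → ∀ g : ZMod 5 × H,
        Sum.inl g ∈ ({Sum.inl (-h), Sum.inl ((2:ℤ) • h), Sum.inr (γ h)} :
          Set ((ZMod 5 × H) ⊕ Fin 2)) → g.2 ≠ 0 := by
      intro h hh g hg
      have hg' : g = -h ∨ g = (2:ℤ) • h := by simpa using hg
      rcases hg' with rfl | rfl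
      · simpa using hh
      · rw [two_zsmul]
        intro h0
        exact hh (Htwo _ (by simpa using h0))
    have U0 : ∀ {T' : Set ((ZMod 5 × H) ⊕ Fin 2)}, T' ∈ B0 → ∀ g g' : ZMod 5 × H, g ≠ g' →
        Sum.inl g ∈ T' → Sum.inl g' ∈ T' →
        ¬(g.2 = 0 ∧ g'.2 = 0) ∧ -(g + g') ≠ g ∧ -(g + g') ≠ g' ∧
          T' = {Sum.inl g, Sum.inl g', Sum.inl (-(g + g'))} := by
      intro T' hT' g g' hgg' hx hy
      rw [hB0] at hT'
      obtain ⟨a, b, c, hab, hac, hbc, hsum, hnz, rfl⟩ := hT'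
      have hgm : g = a ∨ g = b ∨ g = c := by simpa using hx
      have hg'm : g' = a ∨ g' = b ∨ g' = c := by simpa using hy
      obtain ⟨n1, n2, hset⟩ := B0_extract hsum hab hac hbc hgm hg'm hgg'
      refine ⟨?_, n1, n2, ?_⟩
      · rintro ⟨hg0, hg'0⟩
        have hs0 : (-(g + g')).2 = 0 := by simp [hg0, hg'0]
        have snd0 : ∀ z : ZMod 5 × H, z ∈ ({g, g', -(g + g')} : Set (ZMod 5 × H)) →
            z.2 = 0 := by
          intro z hz
          simp only [Set.mem_insert_iff, Set.mem_singleton_iff] at hz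
          rcases hz with rfl | rfl | rfl
          exacts [hg0, hg'0, hs0]
        exact hnz ⟨snd0 a (by rw [← hset]; simp), snd0 b (by rw [← hset]; simp),
          snd0 c (by rw [← hset]; simp)⟩
      · rw [himg, himg, hset]
    intro x y hxy
    have key : ∀ (g : ZMod 5 × H) (i : Fin 2),
        ∃! T, (T ∈ B0 ∪ Binf ∪ Bstar) ∧ Sum.inl g ∈ T ∧ Sum.inr i ∈ T := by
      intro g i
      by_cases hgz : g.2 = 0
      · obtain ⟨T, ⟨hT, hxT, hyT⟩, huniq⟩ :=
          hBpairs _ (Or.inl ⟨g, hgz, rfl⟩) _ (Or.inr ⟨i, rfl⟩) (by simp)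
        refine ⟨T, ⟨Or.inr hT, hxT, hyT⟩, ?_⟩
        rintro T' ⟨hT', hx', hy'⟩
        rcases hT' with (h0 | hinf) | hstar
        · rw [hB0] at h0
          obtain ⟨a, b, c, _, _, _, _, _, rfl⟩ := h0
          simp at hy'
        · rw [hBinf] at hinf
          obtain ⟨h, hh2, rfl⟩ := hinf
          exact absurd hgz (inf_snd h hh2 g hx')
        · exact huniq T' ⟨hstar, hx', hy'⟩
      · obtain ⟨k, hk⟩ := Gsurj2 g
        have hk2 : k.2 ≠ 0 := by
          intro h0
          exact hgz (by rw [← hk]; simp [h0])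
        have hγk : γ k ≠ γ (-g) := by
          have h' := hγ k hk2
          rwa [show ((-2 : ℤ) • k) = -g by rw [neg_zsmul, two_zsmul, hk]] at h'
        have hgneg : (-g).2 ≠ 0 := by simpa using hgz
        by_cases hi : γ (-g) = i
        · refine ⟨{Sum.inl (-(-g)), Sum.inl ((2:ℤ) • -g), Sum.inr (γ (-g))},
            ⟨Or.inl (Or.inr (by rw [hBinf]; exact ⟨-g, hgneg, rfl⟩)), by simp,
              by rw [hi]; simp⟩, ?_⟩
          rintro T' ⟨hT', hx', hy'⟩
          rcases hT' with (h0 | hinf) | hstar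
          · rw [hB0] at h0
            obtain ⟨a, b, c, _, _, _, _, _, rfl⟩ := h0
            simp at hy'
          · rw [hBinf] at hinf
            obtain ⟨h, hh2, rfl⟩ := hinf
            have hih : i = γ h := by simpa using hy'
            have hx'' : g = -h ∨ g = (2:ℤ) • h := by simpa using hx'
            rcases hx'' with h1 | h1
            · have hh : h = -g := by rw [h1]; simp
              rw [hh]
            · exfalso
              have hhk : h = k := Ginj2 (by rw [← two_zsmul, ← h1, hk])
              apply hγk
              rw [hhk] at hih
              exact hih.symm.trans hi.symm
          · exact absurd (star_snd T' hstar g hx') hgz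
        · have hi2 : γ k = i := by
            have pig : ∀ a b i : Fin 2, a ≠ b → ¬ a = i → b = i := by decide
            exact pig _ _ _ (Ne.symm hγk) hi
          refine ⟨{Sum.inl (-k), Sum.inl ((2:ℤ) • k), Sum.inr (γ k)},
            ⟨Or.inl (Or.inr (by rw [hBinf]; exact ⟨k, hk2, rfl⟩)), ?_,
              by rw [hi2]; simp⟩, ?_⟩
          · have h2k : (2:ℤ) • k = g := by rw [two_zsmul, hk]
            rw [h2k]
            exact Or.inr (Or.inl rfl)
          · rintro T' ⟨hT', hx', hy'⟩
            rcases hT' with (h0 | hinf) | hstar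
            · rw [hB0] at h0
              obtain ⟨a, b, c, _, _, _, _, _, rfl⟩ := h0
              simp at hy'
            · rw [hBinf] at hinf
              obtain ⟨h, hh2, rfl⟩ := hinf
              have hih : i = γ h := by simpa using hy'
              have hx'' : g = -h ∨ g = (2:ℤ) • h := by simpa using hx'
              rcases hx'' with h1 | h1
              · exfalso
                have hh : h = -g := by rw [h1]; simp
                rw [hh] at hih
                exact hi hih.symm
              · have hhk : h = k := Ginj2 (by rw [← two_zsmul, ← h1, hk])
                rw [hhk]
            · exact absurd (star_snd T' hstar g hx') hgz
    rcases x with g | i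
    · rcases y with g' | j
      · -- both inl
        have hgg' : g ≠ g' := fun h => hxy (by rw [h])
        by_cases hz : g.2 = 0 ∧ g'.2 = 0
        · obtain ⟨T, ⟨hT, hxT, hyT⟩, huniq⟩ :=
            hBpairs _ (Or.inl ⟨g, hz.1, rfl⟩) _ (Or.inl ⟨g', hz.2, rfl⟩) hxy
          refine ⟨T, ⟨Or.inr hT, hxT, hyT⟩, ?_⟩
          rintro T' ⟨hT', hx', hy'⟩
          rcases hT' with (h0 | hinf) | hstar
          · exact absurd hz (U0 h0 g g' hgg' hx' hy').1
          · rw [hBinf] at hinf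
            obtain ⟨h, hh2, rfl⟩ := hinf
            exact absurd hz.1 (inf_snd h hh2 g hx')
          · exact huniq T' ⟨hstar, hx', hy'⟩
        · by_cases hsg : -(g + g') = g
          · -- third element equals g ; use B-infinity triple with parameter -g
            have hsum' : g + g' = -g := neg_eq_iff_eq_neg.mp hsg
            have hg'eq : g' = -g - g := by rw [← hsum']; abel
            have hgz : g.2 ≠ 0 := by
              intro h0
              exact hz ⟨h0, by rw [hg'eq]; simp [h0]⟩
            have hgneg : (-g).2 ≠ 0 := by simpa using hgz
            have h2g : (2:ℤ) • (-g) = g' := by rw [two_zsmul, hg'eq]; abel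
            refine ⟨{Sum.inl (-(-g)), Sum.inl ((2:ℤ) • -g), Sum.inr (γ (-g))},
              ⟨Or.inl (Or.inr (by rw [hBinf]; exact ⟨-g, hgneg, rfl⟩)), by simp, ?_⟩, ?_⟩
            · rw [h2g]
              exact Or.inr (Or.inl rfl)
            · rintro T' ⟨hT', hx', hy'⟩
              rcases hT' with (h0 | hinf) | hstar
              · exact absurd hsg (U0 h0 g g' hgg' hx' hy').2.1
              · rw [hBinf] at hinf
                obtain ⟨h, hh2, rfl⟩ := hinf
                have hx'' : g = -h ∨ g = (2:ℤ) • h := by simpa using hx'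
                have hy'' : g' = -h ∨ g' = (2:ℤ) • h := by simpa using hy'
                rcases hx'' with h1 | h1
                · have hh : h = -g := by rw [h1]; simp
                  rw [hh]
                · exfalso
                  rcases hy'' with h2 | h2
                  · have hhg : h = -g' := by rw [h2]; simp
                    have hh' : h = g + g := by rw [hhg, hg'eq]; abel
                    have hge : g = (g + g) + (g + g) := by
                      calc g = (2:ℤ) • h := h1
                      _ = (2:ℤ) • (g + g) := by rw [hh']
                      _ = (g + g) + (g + g) := two_zsmul _
                    have h30 : g + g + g = 0 := by
                      have hs0 := sub_eq_zero_of_eq hge.symm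
                      rw [← hs0]; abel
                    exact hgz (by simp [Gthree g h30])
                  · exact hgg' (h1.trans h2.symm)
              · exact absurd (star_snd T' hstar g hx') hgz
          · by_cases hsg' : -(g + g') = g'
            · -- third element equals g' ; B-infinity triple with parameter -g'
              have hsum' : g + g' = -g' := neg_eq_iff_eq_neg.mp hsg'
              have hgeq : g = -g' - g' := by rw [← hsum']; abel
              have hg'z : g'.2 ≠ 0 := by
                intro h0
                exact hz ⟨by rw [hgeq]; simp [h0], h0⟩
              have hg'neg : (-g').2 ≠ 0 := by simpa using hg'z
              have h2g : (2:ℤ) • (-g') = g := by rw [two_zsmul, hgeq]; abel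
              refine ⟨{Sum.inl (-(-g')), Sum.inl ((2:ℤ) • -g'), Sum.inr (γ (-g'))},
                ⟨Or.inl (Or.inr (by rw [hBinf]; exact ⟨-g', hg'neg, rfl⟩)), ?_, by simp⟩, ?_⟩
              · rw [h2g]
                exact Or.inr (Or.inl rfl)
              · rintro T' ⟨hT', hx', hy'⟩
                rcases hT' with (h0 | hinf) | hstar
                · exact absurd hsg' (U0 h0 g g' hgg' hx' hy').2.2.1
                · rw [hBinf] at hinf
                  obtain ⟨h, hh2, rfl⟩ := hinf
                  have hx'' : g = -h ∨ g = (2:ℤ) • h := by simpa using hx'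
                  have hy'' : g' = -h ∨ g' = (2:ℤ) • h := by simpa using hy'
                  rcases hy'' with h2 | h2
                  · have hh : h = -g' := by rw [h2]; simp
                    rw [hh]
                  · exfalso
                    rcases hx'' with h1 | h1
                    · have hhg : h = -g := by rw [h1]; simp
                      have hh' : h = g' + g' := by rw [hhg, hgeq]; abel
                      have hge : g' = (g' + g') + (g' + g') := by
                        calc g' = (2:ℤ) • h := h2
                        _ = (2:ℤ) • (g' + g') := by rw [hh']
                        _ = (g' + g') + (g' + g') := two_zsmul _
                      have h30 : g' + g' + g' = 0 := by
                        have hs0 := sub_eq_zero_of_eq hge.symm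
                        rw [← hs0]; abel
                      exact hg'z (by simp [Gthree g' h30])
                    · exact hgg' (h1.trans h2.symm)
                · exact absurd (star_snd T' hstar g' hy') hg'z
            · -- generic case : B0 triple {g, g', -(g+g')}
              refine ⟨{Sum.inl g, Sum.inl g', Sum.inl (-(g + g'))},
                ⟨Or.inl (Or.inl (by
                  rw [hB0]
                  exact ⟨g, g', -(g + g'), hgg', Ne.symm hsg, Ne.symm hsg', by abel,
                    fun h => hz ⟨h.1, h.2.1⟩, rfl⟩)), by simp, by simp⟩, ?_⟩
              rintro T' ⟨hT', hx', hy'⟩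
              rcases hT' with (h0 | hinf) | hstar
              · exact (U0 h0 g g' hgg' hx' hy').2.2.2
              · exfalso
                rw [hBinf] at hinf
                obtain ⟨h, hh2, rfl⟩ := hinf
                have hx'' : g = -h ∨ g = (2:ℤ) • h := by simpa using hx'
                have hy'' : g' = -h ∨ g' = (2:ℤ) • h := by simpa using hy'
                rcases hx'' with h1 | h1 <;> rcases hy'' with h2 | h2
                · exact hgg' (h1.trans h2.symm)
                · apply hsg
                  rw [h1, h2, two_zsmul]; abel
                · apply hsg'
                  rw [h1, h2, two_zsmul]; abel
                · exact hgg' (h1.trans h2.symm)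
              · exact absurd ⟨star_snd T' hstar g hx', star_snd T' hstar g' hy'⟩ hz
      · exact key g j
    · rcases y with g' | j
      · obtain ⟨T, ⟨hT, h1, h2⟩, huniq⟩ := key g' i
        exact ⟨T, ⟨hT, h2, h1⟩, fun T' h => huniq T' ⟨h.1, h.2.2, h.2.1⟩⟩
      · have hij : i ≠ j := fun h => hxy (by rw [h])
        obtain ⟨T, ⟨hT, h1, h2⟩, huniq⟩ :=
          hBpairs _ (Or.inr ⟨i, rfl⟩) _ (Or.inr ⟨j, rfl⟩) hxy
        refine ⟨T, ⟨Or.inr hT, h1, h2⟩, ?_⟩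
        rintro T' ⟨hT', hx', hy'⟩
        rcases hT' with (h0 | hinf) | hstar
        · rw [hB0] at h0
          obtain ⟨a, b, c, _, _, _, _, _, rfl⟩ := h0
          simp at hx'
        · rw [hBinf] at hinf
          obtain ⟨h, hh2, rfl⟩ := hinf
          have h1' : i = γ h := by simpa using hx'
          have h2' : j = γ h := by simpa using hy'
          exact absurd (h1'.trans h2'.symm) hij
        · exact huniq T' ⟨hstar, hx', hy'⟩
end

section
/- Let H be a finite abelian group of odd order having no element of order 3, let G = Z₅ × H, and let γ be a function from Z₅ × (H \ {0}) to {1, 2} satisfying: (1) γ(g) ≠ γ(−2g) for all g in its domain, and (2) γ(g) = γ(g′) whenever g + g′ ∈ Z₅ × {0}. Let ∞₁ and ∞₂ be two points not in G. Let B⁰ be the collection of 3-element subsets {g, g′, g″} of G with g + g′ + g″ = 0 that are not contained in Z₅ × {0}; let B^∞ = { {−g, 2g, ∞_{γ(g)}} : g ∈ Z₅ × (H \ {0}) }; and let B* be the triple set of a Steiner triple system of order 7 on the point set (Z₅ × {0}) ∪ {∞₁, ∞₂} such that the triple {0_G, ∞₁, ∞₂} is not in B*. Then the Steiner triple system (G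 ∪ {∞₁, ∞₂}, B⁰ ∪ B^∞ ∪ B*) has no parallel class, i.e., no subset of B⁰ ∪ B^∞ ∪ B* partitions the point set G ∪ {∞₁, ∞₂}. -/
/-!
Weigh each point of `G = Z₅ × H` by itself and each point at infinity by `0`. Since `|G|` is odd,
all weights add up to `0`, hence so do the weights of the blocks of a parallel class. A block of
`B⁰` weighs `0`, a block `{-g, 2g, ∞}` of `B^∞` weighs `g ∉ Z₅ × {0}`, and a block of `B*` weighs
an element of `Z₅ × {0}`. Any two blocks of a Steiner triple system of order 7 meet, so a parallel
class contains at most one block of `B*`.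

If `∞₁, ∞₂` lie in different blocks, the `H`-components of their weights add up to `0`; this
forces both blocks into `B^∞`, against condition (2). If they lie in one block `{∞₁, ∞₂, x}`, that
block is in `B*` and all other blocks are in `B⁰`, so `x = 0`, which is excluded.
-/

/-- `B` has a parallel class: a subcollection of `B` partitioning the point set,
i.e. every point lies in exactly one of its triples. -/
def HasParallelClass {V : Type*} (B : Set (Set V)) : Prop :=
  ∃ C ⊆ B, ∀ x : V, ∃! T, T ∈ C ∧ x ∈ T

theorem Set.exists_eq_insert_insert_of_ncard_eq_three {V : Type*} {S : Set V} (hS : S.ncard = 3)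
    {a p : V} (ha : a ∈ S) (hp : p ∈ S) (hap : a ≠ p) :
    ∃ z ∈ S, z ≠ a ∧ z ≠ p ∧ S = {a, p, z} := by
  have hsub : {a, p} ⊆ S := Set.pair_subset ha hp
  obtain ⟨z, hz⟩ : ∃ z, S \ {a, p} = {z} := by
    rw [← Set.ncard_eq_one, Set.ncard_sdiff hsub, hS, Set.ncard_pair hap]
  have hzS : z ∈ S \ {a, p} := hz ▸ rfl
  simp only [Set.mem_sdiff, Set.mem_insert_iff, Set.mem_singleton_iff, not_or] at hzS
  refine ⟨z, hzS.1, hzS.2.1, hzS.2.2, ?_⟩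
  rw [← Set.union_sdiff_cancel hsub, hz, Set.insert_union, Set.singleton_union]

structure IsSteinerTripleSystem {V : Type*} (W : Set V) (B : Set (Set V)) : Prop where
  subset : ∀ T ∈ B, T ⊆ W
  ncard_eq_three : ∀ T ∈ B, T.ncard = 3
  existsUnique : ∀ x ∈ W, ∀ y ∈ W, x ≠ y → ∃! T, T ∈ B ∧ x ∈ T ∧ y ∈ T

namespace IsSteinerTripleSystem

variable {V : Type*} {W : Set V} {B : Set (Set V)}

theorem eq_of_mem_of_mem (hS : IsSteinerTripleSystem W B) {T T' : Set V} (hT : T ∈ B)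
    (hT' : T' ∈ B) {x y : V} (hxy : x ≠ y) (hxT : x ∈ T) (hyT : y ∈ T) (hxT' : x ∈ T')
    (hyT' : y ∈ T') : T = T' :=
  (hS.existsUnique x (hS.subset T hT hxT) y (hS.subset T hT hyT) hxy).unique
    ⟨hT, hxT, hyT⟩ ⟨hT', hxT', hyT'⟩

/-- Blocks through `a ∈ T₁` meeting `T₂` in different points both pass through the only point
outside `T₁ ∪ T₂`, hence coincide. -/
theorem not_disjoint (hS : IsSteinerTripleSystem W B) (hW : W.ncard = 7) {T₁ T₂ : Set V}
    (h₁ : T₁ ∈ B) (h₂ : T₂ ∈ B) : ¬Disjoint T₁ T₂ := by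
  intro hd
  have hWfin : W.Finite := Set.finite_of_ncard_ne_zero (by omega)
  obtain ⟨a, ha⟩ : T₁.Nonempty :=
    Set.nonempty_of_ncard_ne_zero (by rw [hS.ncard_eq_three _ h₁]; norm_num)
  have haT₂ : a ∉ T₂ := Set.disjoint_left.mp hd ha
  obtain ⟨r, hr⟩ : ∃ r, W \ (T₁ ∪ T₂) = {r} := by
    have hsub := Set.union_subset (hS.subset _ h₁) (hS.subset _ h₂)
    rw [← Set.ncard_eq_one, Set.ncard_sdiff' hsub hWfin,
      Set.ncard_union_eq hd (hWfin.subset (hS.subset _ h₁)) (hWfin.subset (hS.subset _ h₂)),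
      hS.ncard_eq_three _ h₁, hS.ncard_eq_three _ h₂, hW]
  have hr_mem : ∀ p ∈ T₂, ∀ L ∈ B, a ∈ L → p ∈ L → r ∈ L := by
    intro p hp L hL haL hpL
    have hap : a ≠ p := fun h => haT₂ (h ▸ hp)
    obtain ⟨z, hzL, hza, hzp, -⟩ :=
      Set.exists_eq_insert_insert_of_ncard_eq_three (hS.ncard_eq_three L hL) haL hpL hap
    have hzT₁ : z ∉ T₁ := fun hz =>
      Set.disjoint_left.mp hd (hS.eq_of_mem_of_mem hL h₁ hza.symm haL hzL ha hz ▸ hpL) hp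
    have hzT₂ : z ∉ T₂ := fun hz =>
      haT₂ (hS.eq_of_mem_of_mem hL h₂ hzp.symm hpL hzL hp hz ▸ haL)
    have hz : z ∈ W \ (T₁ ∪ T₂) := ⟨hS.subset L hL hzL, by simp [hzT₁, hzT₂]⟩
    rw [hr] at hz
    exact hz ▸ hzL
  obtain ⟨d, e, f, hde, -, -, hT₂⟩ := Set.ncard_eq_three.mp (hS.ncard_eq_three _ h₂)
  have hd₂ : d ∈ T₂ := by simp [hT₂]
  have he₂ : e ∈ T₂ := by simp [hT₂]
  have haW := hS.subset _ h₁ ha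
  have hrW : r ∈ W \ (T₁ ∪ T₂) := hr ▸ rfl
  have har : a ≠ r := fun h => hrW.2 (Or.inl (h ▸ ha))
  obtain ⟨Ld, ⟨hLd, haLd, hdLd⟩, -⟩ :=
    hS.existsUnique a haW d (hS.subset _ h₂ hd₂) (fun h => haT₂ (h ▸ hd₂))
  obtain ⟨Le, ⟨hLe, haLe, heLe⟩, -⟩ :=
    hS.existsUnique a haW e (hS.subset _ h₂ he₂) (fun h => haT₂ (h ▸ he₂))
  have hLde : Ld = Le := hS.eq_of_mem_of_mem hLd hLe har haLd
    (hr_mem d hd₂ Ld hLd haLd hdLd) haLe (hr_mem e he₂ Le hLe haLe heLe)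
  exact haT₂ (hS.eq_of_mem_of_mem hLd h₂ hde hdLd (hLde ▸ heLe) hd₂ he₂ ▸ haLd)

end IsSteinerTripleSystem

theorem sum_univ_eq_zero_of_odd_card {A : Type*} [AddCommGroup A] [Fintype A]
    (h : Odd (Fintype.card A)) : ∑ x : A, x = 0 := by
  obtain ⟨k, hk⟩ := h
  have hneg : ∑ x : A, -x = ∑ x : A, x := Equiv.sum_comp (Equiv.neg A) fun x => x
  have h2 : ∑ x : A, x + ∑ x : A, x = 0 := by
    nth_rewrite 1 [← hneg]
    rw [Finset.sum_neg_distrib, neg_add_cancel]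
  calc ∑ x : A, x = (2 * k + 1) • ∑ x : A, x - k • (∑ x : A, x + ∑ x : A, x) := by module
    _ = 0 := by rw [← hk, card_nsmul_eq_zero, h2, smul_zero, sub_zero]

theorem Set.pairwiseDisjoint_of_existsUnique {V : Type*} {C : Set (Set V)}
    (hC : ∀ x, ∃! T, T ∈ C ∧ x ∈ T) : C.PairwiseDisjoint id :=
  fun _ hT _ hT' hne => Set.disjoint_left.mpr fun x hx hx' =>
    hne ((hC x).unique ⟨hT, hx⟩ ⟨hT', hx'⟩)

theorem finsum_mem_finsum_mem_of_existsUnique {V M : Type*} [Finite V] [AddCommMonoid M]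
    {C : Set (Set V)} (hC : ∀ x, ∃! T, T ∈ C ∧ x ∈ T) (f : V → M) :
    ∑ᶠ T ∈ C, ∑ᶠ x ∈ T, f x = ∑ᶠ x, f x := by
  have hU : ⋃₀ C = Set.univ := Set.eq_univ_of_forall fun x =>
    let ⟨T, ⟨hT, hx⟩, _⟩ := hC x; ⟨T, hT, hx⟩
  rw [← finsum_mem_sUnion (Set.pairwiseDisjoint_of_existsUnique hC) (Set.toFinite C)
    fun T _ => Set.toFinite T, hU, finsum_mem_univ]

theorem finsum_mem_eq_finsum_mem_of_subset {α M : Type*} [AddCommMonoid M] {f : α → M}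
    {s t : Set α} (hst : s ⊆ t) (ht : t.Finite) (hf : ∀ x ∈ t \ s, f x = 0) :
    ∑ᶠ x ∈ t, f x = ∑ᶠ x ∈ s, f x := by
  rw [← finsum_mem_add_sdiff hst ht, finsum_mem_eq_zero_of_forall_eq_zero hf, add_zero]

section sumOfInl

variable {G ι : Type*} [AddCommGroup G]

noncomputable def sumOfInl (T : Set (G ⊕ ι)) : G := ∑ᶠ x ∈ T, Sum.elim id 0 x

theorem sumOfInl_mem {K : AddSubgroup G} {T : Set (G ⊕ ι)}
    (hT : T ⊆ Sum.inl '' K ∪ Set.range Sum.inr) : sumOfInl T ∈ K := by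
  refine finsum_mem_induction (· ∈ K) K.zero_mem (fun _ _ => K.add_mem) fun x hx => ?_
  rcases hT hx with ⟨g, hg, rfl⟩ | ⟨i, rfl⟩
  exacts [hg, K.zero_mem]

theorem finsum_mem_sumOfInl_eq_zero [Fintype G] [Fintype ι] (hodd : Odd (Fintype.card G))
    {C : Set (Set (G ⊕ ι))} (hC : ∀ x, ∃! T, T ∈ C ∧ x ∈ T) :
    ∑ᶠ T ∈ C, sumOfInl T = 0 := by
  simp only [sumOfInl]
  rw [finsum_mem_finsum_mem_of_existsUnique hC, finsum_eq_sum_of_fintype,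
    Fintype.sum_sum_type]
  simp [sum_univ_eq_zero_of_odd_card hodd]

@[simp]
theorem sumOfInl_insert_inl {a : G} {T : Set (G ⊕ ι)} (ha : Sum.inl a ∉ T) (hT : T.Finite) :
    sumOfInl (insert (Sum.inl a) T) = a + sumOfInl T :=
  finsum_mem_insert _ ha hT

@[simp]
theorem sumOfInl_insert_inr (i : ι) (T : Set (G ⊕ ι)) :
    sumOfInl (insert (Sum.inr i) T) = sumOfInl T :=
  finsum_mem_insert_zero rfl

@[simp]
theorem sumOfInl_singleton_inl (a : G) : sumOfInl ({Sum.inl a} : Set (G ⊕ ι)) = a :=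
  finsum_mem_singleton

@[simp]
theorem sumOfInl_singleton_inr (i : ι) : sumOfInl ({Sum.inr i} : Set (G ⊕ ι)) = 0 :=
  finsum_mem_singleton

end sumOfInl

theorem neg_ne_two_zsmul_of_addOrderOf_ne_three {A : Type*} [AddGroup A] (h3 : ∀ x : A, addOrderOf x ≠ 3) {x : A}
    (hx : x ≠ 0) : -x ≠ (2 : ℤ) • x := by
  intro h
  refine h3 x (addOrderOf_eq_prime ?_ hx)
  have : (3 : ℤ) • x = 0 := by
    rw [show (3 : ℤ) = 1 + 2 by norm_num, add_zsmul, ← h, one_zsmul, add_neg_cancel]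
  exact_mod_cast this

def zeroSumBlocks (H : Type*) [AddCommGroup H] : Set (Set ((ZMod 5 × H) ⊕ Fin 2)) :=
  {T | ∃ g g' g'' : ZMod 5 × H, g ≠ g' ∧ g ≠ g'' ∧ g' ≠ g'' ∧
    g + g' + g'' = 0 ∧ ¬(g.2 = 0 ∧ g'.2 = 0 ∧ g''.2 = 0) ∧
    T = {Sum.inl g, Sum.inl g', Sum.inl g''}}

def infinityBlocks {H : Type*} [AddCommGroup H] (γ : ZMod 5 × H → Fin 2) :
    Set (Set ((ZMod 5 × H) ⊕ Fin 2)) :=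
  {T | ∃ g : ZMod 5 × H, g.2 ≠ 0 ∧ T = {Sum.inl (-g), Sum.inl ((2 : ℤ) • g), Sum.inr (γ g)}}

def starPoints (H : Type*) [AddCommGroup H] : Set ((ZMod 5 × H) ⊕ Fin 2) :=
  Sum.inl '' {g : ZMod 5 × H | g.2 = 0} ∪ Set.range Sum.inr

section Construction

variable {H : Type*} [AddCommGroup H]

theorem ncard_starPoints [Finite H] : (starPoints H).ncard = 7 := by
  have h5 : {g : ZMod 5 × H | g.2 = 0}.ncard = 5 := by
    rw [show {g : ZMod 5 × H | g.2 = 0} = Set.univ ×ˢ {0} by ext; simp, Set.ncard_prod,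
      Set.ncard_univ, Set.ncard_singleton, Nat.card_zmod, mul_one]
  rw [starPoints, Set.ncard_union_eq (Set.isCompl_range_inl_range_inr.disjoint.mono_left
    (Set.image_subset_range _ _)), Set.ncard_image_of_injective _ Sum.inl_injective, h5,
    Set.ncard_range_of_injective Sum.inr_injective, Nat.card_fin]

theorem sumOfInl_snd_eq_zero {T : Set ((ZMod 5 × H) ⊕ Fin 2)} (hT : T ⊆ starPoints H) :
    (sumOfInl T).2 = 0 :=
  sumOfInl_mem (K := (AddMonoidHom.snd (ZMod 5) H).ker) hT

theorem sumOfInl_eq_zero_of_mem_zeroSumBlocks {T : Set ((ZMod 5 × H) ⊕ Fin 2)}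
    (hT : T ∈ zeroSumBlocks H) : sumOfInl T = 0 := by
  obtain ⟨g, g', g'', h₁, h₂, h₃, hsum, -, rfl⟩ := hT
  simp [h₁, h₂, h₃, ← add_assoc, hsum]

theorem inr_notMem_of_mem_zeroSumBlocks {T : Set ((ZMod 5 × H) ⊕ Fin 2)}
    (hT : T ∈ zeroSumBlocks H) (i : Fin 2) : Sum.inr i ∉ T := by
  obtain ⟨g, g', g'', -, -, -, -, -, rfl⟩ := hT
  simp

theorem sumOfInl_infinityBlock (h3 : ∀ x : H, addOrderOf x ≠ 3) {g : ZMod 5 × H}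
    (hg : g.2 ≠ 0) (i : Fin 2) :
    sumOfInl ({Sum.inl (-g), Sum.inl ((2 : ℤ) • g), Sum.inr i} : Set ((ZMod 5 × H) ⊕ Fin 2))
      = g := by
  have hne : -g ≠ (2 : ℤ) • g := fun h => neg_ne_two_zsmul_of_addOrderOf_ne_three h3 hg congr($h.2)
  rw [sumOfInl_insert_inl (by simpa using hne) (Set.toFinite _),
    sumOfInl_insert_inl (by simp) (Set.toFinite _), sumOfInl_singleton_inr]
  module

variable {γ : ZMod 5 × H → Fin 2} {Bstar : Set (Set ((ZMod 5 × H) ⊕ Fin 2))}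

theorem exists_eq_infinityBlock_of_inr_mem {T : Set ((ZMod 5 × H) ⊕ Fin 2)}
    (hT : T ∈ zeroSumBlocks H ∪ infinityBlocks γ ∪ Bstar) {i : Fin 2} (hi : Sum.inr i ∈ T)
    (hT' : T ∉ Bstar) : ∃ g : ZMod 5 × H, g.2 ≠ 0 ∧ γ g = i ∧
      T = {Sum.inl (-g), Sum.inl ((2 : ℤ) • g), Sum.inr i} := by
  rcases hT with (hT | ⟨g, hg, rfl⟩) | hT
  · exact absurd hi (inr_notMem_of_mem_zeroSumBlocks hT i)
  · obtain rfl : i = γ g := by simpa using hi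
    exact ⟨g, hg, rfl, rfl⟩
  · exact absurd hT hT'

theorem mem_or_exists_sumOfInl_eq_of_inr_mem (h3 : ∀ x : H, addOrderOf x ≠ 3)
    {T : Set ((ZMod 5 × H) ⊕ Fin 2)} (hT : T ∈ zeroSumBlocks H ∪ infinityBlocks γ ∪ Bstar)
    {i : Fin 2} (hi : Sum.inr i ∈ T) :
    T ∈ Bstar ∨ ∃ g : ZMod 5 × H, g.2 ≠ 0 ∧ γ g = i ∧ sumOfInl T = g := by
  refine or_iff_not_imp_left.2 fun hT' => ?_
  obtain ⟨g, hg, hγ, rfl⟩ := exists_eq_infinityBlock_of_inr_mem hT hi hT'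
  exact ⟨g, hg, hγ, sumOfInl_infinityBlock h3 hg i⟩

theorem mem_zeroSumBlocks_or_mem_of_forall_inr_notMem {T : Set ((ZMod 5 × H) ⊕ Fin 2)}
    (hT : T ∈ zeroSumBlocks H ∪ infinityBlocks γ ∪ Bstar) (hinr : ∀ i, Sum.inr i ∉ T) :
    T ∈ zeroSumBlocks H ∨ T ∈ Bstar := by
  rcases hT with (hT | ⟨g, -, rfl⟩) | hT
  · exact .inl hT
  · exact absurd (by simp) (hinr (γ g))
  · exact .inr hT

theorem sumOfInl_snd_eq_zero_of_forall_inr_notMem (hBsub : ∀ T ∈ Bstar, T ⊆ starPoints H)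
    {T : Set ((ZMod 5 × H) ⊕ Fin 2)} (hT : T ∈ zeroSumBlocks H ∪ infinityBlocks γ ∪ Bstar)
    (hinr : ∀ i, Sum.inr i ∉ T) : (sumOfInl T).2 = 0 := by
  rcases mem_zeroSumBlocks_or_mem_of_forall_inr_notMem hT hinr with hT | hT
  · rw [sumOfInl_eq_zero_of_mem_zeroSumBlocks hT, Prod.snd_zero]
  · exact sumOfInl_snd_eq_zero (hBsub T hT)

variable [Finite H] {C : Set (Set ((ZMod 5 × H) ⊕ Fin 2))}

theorem eq_of_inr_zero_mem_of_inr_one_mem (h3 : ∀ x : H, addOrderOf x ≠ 3)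
    (hγ2 : ∀ g g' : ZMod 5 × H, g.2 ≠ 0 → g'.2 ≠ 0 → (g + g').2 = 0 → γ g = γ g')
    (hS : IsSteinerTripleSystem (starPoints H) Bstar)
    (hCB : C ⊆ zeroSumBlocks H ∪ infinityBlocks γ ∪ Bstar) (hC : ∀ x, ∃! T, T ∈ C ∧ x ∈ T)
    (hsum : ∑ᶠ T ∈ C, sumOfInl T = 0) {T₀ T₁ : Set ((ZMod 5 × H) ⊕ Fin 2)}
    (hT₀ : T₀ ∈ C) (hT₁ : T₁ ∈ C) (h₀ : Sum.inr 0 ∈ T₀) (h₁ : Sum.inr 1 ∈ T₁) : T₀ = T₁ := by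
  by_contra hne
  have hrest : ∀ T ∈ C \ {T₀, T₁}, (sumOfInl T).2 = 0 := by
    rintro T ⟨hT, hT'⟩
    refine sumOfInl_snd_eq_zero_of_forall_inr_notMem hS.subset (hCB hT) fun i hi => ?_
    fin_cases i
    exacts [hT' (.inl ((hC _).unique ⟨hT, hi⟩ ⟨hT₀, h₀⟩)),
      hT' (.inr ((hC _).unique ⟨hT, hi⟩ ⟨hT₁, h₁⟩))]
  have hsnd : (sumOfInl T₀).2 + (sumOfInl T₁).2 = 0 :=
    calc (sumOfInl T₀).2 + (sumOfInl T₁).2 =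
          ∑ᶠ T ∈ ({T₀, T₁} : Set (Set ((ZMod 5 × H) ⊕ Fin 2))), (sumOfInl T).2 :=
          (finsum_mem_pair (f := fun T => (sumOfInl T).2) hne).symm
      _ = ∑ᶠ T ∈ C, (sumOfInl T).2 :=
          (finsum_mem_eq_finsum_mem_of_subset (Set.pair_subset hT₀ hT₁) C.toFinite hrest).symm
      _ = (∑ᶠ T ∈ C, sumOfInl T).2 :=
          ((AddMonoidHom.snd (ZMod 5) H).map_finsum_mem sumOfInl C.toFinite).symm
      _ = 0 := by rw [hsum, Prod.snd_zero]
  rcases mem_or_exists_sumOfInl_eq_of_inr_mem h3 (hCB hT₀) h₀ with hs₀ | ⟨g₀, hg₀, hγ₀, hw₀⟩ <;>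
    rcases mem_or_exists_sumOfInl_eq_of_inr_mem h3 (hCB hT₁) h₁ with hs₁ | ⟨g₁, hg₁, hγ₁, hw₁⟩
  · exact hS.not_disjoint ncard_starPoints hs₀ hs₁
      (Set.pairwiseDisjoint_of_existsUnique hC hT₀ hT₁ hne)
  · rw [sumOfInl_snd_eq_zero (hS.subset _ hs₀), hw₁, zero_add] at hsnd
    exact hg₁ hsnd
  · rw [sumOfInl_snd_eq_zero (hS.subset _ hs₁), hw₀, add_zero] at hsnd
    exact hg₀ hsnd
  · rw [hw₀, hw₁, ← Prod.snd_add] at hsnd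
    exact zero_ne_one (hγ₀ ▸ hγ₁ ▸ hγ2 g₀ g₁ hg₀ hg₁ hsnd)

theorem inr_one_notMem_of_inr_zero_mem (hS : IsSteinerTripleSystem (starPoints H) Bstar)
    (h0 : ({Sum.inl 0, Sum.inr 0, Sum.inr 1} : Set ((ZMod 5 × H) ⊕ Fin 2)) ∉ Bstar)
    (hCB : C ⊆ zeroSumBlocks H ∪ infinityBlocks γ ∪ Bstar) (hC : ∀ x, ∃! T, T ∈ C ∧ x ∈ T)
    (hsum : ∑ᶠ T ∈ C, sumOfInl T = 0) {T : Set ((ZMod 5 × H) ⊕ Fin 2)} (hT : T ∈ C)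
    (h₀ : Sum.inr 0 ∈ T) : Sum.inr 1 ∉ T := by
  intro h₁
  have hinr : ∀ i, Sum.inr i ∈ T := fun i => by fin_cases i; exacts [h₀, h₁]
  have hTs : T ∈ Bstar := by
    by_contra hTs
    obtain ⟨g, -, -, rfl⟩ := exists_eq_infinityBlock_of_inr_mem (hCB hT) h₀ hTs
    simp at h₁
  have hrest : ∀ T' ∈ C \ {T}, sumOfInl T' = 0 := by
    rintro T' ⟨hT', hne⟩
    have hd : Disjoint T' T := Set.pairwiseDisjoint_of_existsUnique hC hT' hT hne
    rcases mem_zeroSumBlocks_or_mem_of_forall_inr_notMem (hCB hT')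
      (fun i hi => Set.disjoint_left.mp hd hi (hinr i)) with h | h
    · exact sumOfInl_eq_zero_of_mem_zeroSumBlocks h
    · exact absurd hd (hS.not_disjoint ncard_starPoints h hTs)
  obtain ⟨z, hzT, hz₀, hz₁, rfl⟩ := Set.exists_eq_insert_insert_of_ncard_eq_three
    (hS.ncard_eq_three T hTs) h₀ h₁ (by simp)
  obtain ⟨x, -, rfl⟩ : ∃ x : ZMod 5 × H, x.2 = 0 ∧ Sum.inl x = z := by
    rcases hS.subset _ hTs hzT with hz | ⟨i, rfl⟩
    · exact hz
    · fin_cases i <;> simp at hz₀ hz₁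
  have hx : x = 0 := by
    rw [finsum_mem_eq_finsum_mem_of_subset (Set.singleton_subset_iff.2 hT) C.toFinite hrest,
      finsum_mem_singleton] at hsum
    simpa using hsum
  subst hx
  rw [Set.pair_comm, Set.insert_comm] at hTs
  exact h0 hTs

end Construction

theorem stmt14_general {H : Type*} [AddCommGroup H] [Fintype H]
    (hodd : Odd (Fintype.card H)) (h3 : ∀ x : H, addOrderOf x ≠ 3)
    -- γ sends Z₅ × (H \ {0}) to the two-element set indexing ∞₁, ∞₂
    (γ : ZMod 5 × H → Fin 2)
    (hγ2 : ∀ g g' : ZMod 5 × H, g.2 ≠ 0 → g'.2 ≠ 0 → (g + g').2 = 0 → γ g = γ g')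
    -- B* : the triples of a Steiner triple system of order 7 on (Z₅ × {0}) ∪ {∞₁, ∞₂}
    (Bstar : Set (Set ((ZMod 5 × H) ⊕ Fin 2)))
    (hBsub : ∀ T ∈ Bstar,
      T ⊆ (Sum.inl '' {g : ZMod 5 × H | g.2 = 0}) ∪ Set.range Sum.inr)
    (hBcard : ∀ T ∈ Bstar, T.ncard = 3)
    (hBpairs : ∀ x ∈ (Sum.inl '' {g : ZMod 5 × H | g.2 = 0}) ∪
        Set.range (Sum.inr : Fin 2 → (ZMod 5 × H) ⊕ Fin 2),
      ∀ y ∈ (Sum.inl '' {g : ZMod 5 × H | g.2 = 0}) ∪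
        Set.range (Sum.inr : Fin 2 → (ZMod 5 × H) ⊕ Fin 2),
      x ≠ y → ∃! T, T ∈ Bstar ∧ x ∈ T ∧ y ∈ T)
    -- the triple {0_G, ∞₁, ∞₂} is not in B*
    (h0 : ({Sum.inl 0, Sum.inr 0, Sum.inr 1} :
        Set ((ZMod 5 × H) ⊕ Fin 2)) ∉ Bstar) :
    ¬ HasParallelClass
      (({T | ∃ g g' g'' : ZMod 5 × H, g ≠ g' ∧ g ≠ g'' ∧ g' ≠ g'' ∧
            g + g' + g'' = 0 ∧ ¬(g.2 = 0 ∧ g'.2 = 0 ∧ g''.2 = 0) ∧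
            T = {Sum.inl g, Sum.inl g', Sum.inl g''}} :
          Set (Set ((ZMod 5 × H) ⊕ Fin 2)))
        ∪ {T | ∃ g : ZMod 5 × H, g.2 ≠ 0 ∧
            T = {Sum.inl (-g), Sum.inl ((2 : ℤ) • g), Sum.inr (γ g)}}
        ∪ Bstar) := by
  rintro ⟨C, hCB, hC⟩
  have hS : IsSteinerTripleSystem (starPoints H) Bstar := ⟨hBsub, hBcard, hBpairs⟩
  have hsum : ∑ᶠ T ∈ C, sumOfInl T = 0 := finsum_mem_sumOfInl_eq_zero
    (by rw [Fintype.card_prod, ZMod.card]; exact Nat.odd_mul.2 ⟨by decide, hodd⟩) hC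
  obtain ⟨T₀, ⟨hT₀, h₀⟩, -⟩ := hC (.inr 0)
  obtain ⟨T₁, ⟨hT₁, h₁⟩, -⟩ := hC (.inr 1)
  have hT : T₀ = T₁ := eq_of_inr_zero_mem_of_inr_one_mem h3 hγ2 hS hCB hC hsum hT₀ hT₁ h₀ h₁
  exact inr_one_notMem_of_inr_zero_mem hS h0 hCB hC hsum hT₀ h₀ (hT ▸ h₁)

theorem stmt14 {H : Type*} [AddCommGroup H] [Fintype H]
    (hodd : Odd (Fintype.card H)) (h3 : ∀ x : H, addOrderOf x ≠ 3)
    -- γ sends Z₅ × (H \ {0}) to the two-element set indexing ∞₁, ∞₂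
    (γ : ZMod 5 × H → Fin 2)
    (hγ1 : ∀ g : ZMod 5 × H, g.2 ≠ 0 → γ g ≠ γ ((-2 : ℤ) • g))
    (hγ2 : ∀ g g' : ZMod 5 × H, g.2 ≠ 0 → g'.2 ≠ 0 → (g + g').2 = 0 → γ g = γ g')
    -- B* : the triples of a Steiner triple system of order 7 on (Z₅ × {0}) ∪ {∞₁, ∞₂}
    (Bstar : Set (Set ((ZMod 5 × H) ⊕ Fin 2)))
    (hBsub : ∀ T ∈ Bstar,
      T ⊆ (Sum.inl '' {g : ZMod 5 × H | g.2 = 0}) ∪ Set.range Sum.inr)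
    (hBcard : ∀ T ∈ Bstar, T.ncard = 3)
    (hBpairs : ∀ x ∈ (Sum.inl '' {g : ZMod 5 × H | g.2 = 0}) ∪
        Set.range (Sum.inr : Fin 2 → (ZMod 5 × H) ⊕ Fin 2),
      ∀ y ∈ (Sum.inl '' {g : ZMod 5 × H | g.2 = 0}) ∪
        Set.range (Sum.inr : Fin 2 → (ZMod 5 × H) ⊕ Fin 2),
      x ≠ y → ∃! T, T ∈ Bstar ∧ x ∈ T ∧ y ∈ T)
    -- the triple {0_G, ∞₁, ∞₂} is not in B*
    (h0 : ({Sum.inl 0, Sum.inr 0, Sum.inr 1} :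
        Set ((ZMod 5 × H) ⊕ Fin 2)) ∉ Bstar) :
    ¬ HasParallelClass
      (({T | ∃ g g' g'' : ZMod 5 × H, g ≠ g' ∧ g ≠ g'' ∧ g' ≠ g'' ∧
            g + g' + g'' = 0 ∧ ¬(g.2 = 0 ∧ g'.2 = 0 ∧ g''.2 = 0) ∧
            T = {Sum.inl g, Sum.inl g', Sum.inl g''}} :
          Set (Set ((ZMod 5 × H) ⊕ Fin 2)))
        ∪ {T | ∃ g : ZMod 5 × H, g.2 ≠ 0 ∧
            T = {Sum.inl (-g), Sum.inl ((2 : ℤ) • g), Sum.inr (γ g)}}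
        ∪ Bstar) :=
  stmt14_general hodd h3 γ hγ2 Bstar hBsub hBcard hBpairs h0
end
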